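/- arXiv:2305.07169 — 2 statements merged into one kernel-verified Lean document; each statement's English description precedes it below -/
import Mathlib

section
/- Let ‖·‖ be a smooth unitarily invariant norm on M_n(ℂ). Let σ ∈ M_n(ℂ) be positive semidefinite with ‖σ‖ = 1, and let η be its norming functional (the unique B ∈ M_n(ℂ) with ‖B‖* = 1 and tr(Bσ) = 1). Then η is positive semidefinite, η commutes with σ (ησ = ση), the product ησ is positive semidefinite, and tr(ησ) = 1 (i.e. ησ is a state, in particular ‖ησ‖_1 = 1). -/
open scoped ComplexOrder Matrix

/-- The `r`-th power (`r` a real exponent) of a matrix, given by the functional calculus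
applied to the real power function.  For positive semidefinite matrices this is the usual
power from the functional calculus. -/
noncomputable def matPow {n : ℕ} (A : Matrix (Fin n) (Fin n) ℂ) (r : ℝ) :
    Matrix (Fin n) (Fin n) ℂ :=
  cfc (fun t : ℝ => t ^ r) A

/-- The absolute value `|A| = (AᴴA)^(1/2)` of a matrix. -/
noncomputable def matAbs {n : ℕ} (A : Matrix (Fin n) (Fin n) ℂ) :
    Matrix (Fin n) (Fin n) ℂ :=
  cfc (fun t : ℝ => Real.sqrt t) (Aᴴ * A)

/-- The trace norm `‖A‖₁ = tr |A|`. -/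
noncomputable def trNorm {n : ℕ} (A : Matrix (Fin n) (Fin n) ℂ) : ℝ :=
  ((matAbs A).trace).re

/-- The operator norm (largest singular value) of a matrix. -/
noncomputable def opNorm {n : ℕ} (A : Matrix (Fin n) (Fin n) ℂ) : ℝ :=
  ‖Matrix.toEuclideanCLM (𝕜 := ℂ) A‖

/-- `N` is a unitarily invariant norm on the `n × n` complex matrices: it is a norm
satisfying `N (U * A * V) = N A` for all unitaries `U`, `V`. -/
def IsUnitarilyInvariantNorm {n : ℕ} (N : Matrix (Fin n) (Fin n) ℂ → ℝ) : Prop :=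
  (∀ A B, N (A + B) ≤ N A + N B) ∧
  (∀ (c : ℂ) (A), N (c • A) = ‖c‖ * N A) ∧
  (∀ A, N A = 0 → A = 0) ∧
  (∀ (A U V : Matrix (Fin n) (Fin n) ℂ),
    U ∈ Matrix.unitaryGroup (Fin n) ℂ → V ∈ Matrix.unitaryGroup (Fin n) ℂ →
    N (U * A * V) = N A)

/-- The dual norm of `N` with respect to trace duality:
`‖B‖* = sup {|tr (B * A)| : N A ≤ 1}`. -/
noncomputable def dualNorm {n : ℕ} (N : Matrix (Fin n) (Fin n) ℂ → ℝ)
    (B : Matrix (Fin n) (Fin n) ℂ) : ℝ :=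
  sSup ((fun A => ‖(B * A).trace‖) '' {A | N A ≤ 1})

/-- `N` is smooth: every nonzero matrix admits a unique norming functional. -/
def IsSmoothNorm {n : ℕ} (N : Matrix (Fin n) (Fin n) ℂ → ℝ) : Prop :=
  ∀ A : Matrix (Fin n) (Fin n) ℂ, A ≠ 0 →
    ∃! B : Matrix (Fin n) (Fin n) ℂ, dualNorm N B = 1 ∧ (B * A).trace = (N A : ℂ)

/-!
Diagonalise `σ = U diag(d) U*` with `d ≥ 0`; conjugation by `U` preserves `N`, the dual norm and
traces, so `U* η U` is the norming functional of `diag(d)`. Conjugating it by the diagonal sign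
unitary flipping coordinate `i` again gives a norming functional of `diag(d)`, so by smoothness it
is fixed, which kills row and column `i` off the diagonal: `U* η U = diag(e)`. Let `V` be the
diagonal unitary with `Vᵢ eᵢ = |eᵢ|`. Then `‖V diag(e)‖* = 1` and
`N σ = |∑ eᵢ dᵢ| ≤ ∑ |eᵢ| dᵢ = tr (V diag(e) diag(d)) ≤ N σ`, so `V diag(e)` is norming as well,
and uniqueness gives `eᵢ = |eᵢ| ≥ 0`. Thus `η ≥ 0` commutes with `σ`, and the product of
commuting positive semidefinite matrices is positive semidefinite.
-/

open Matrix Unitary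

lemma Matrix.trace_conjStarAlgAut {ι R : Type*} [Fintype ι] [DecidableEq ι] [CommRing R]
    [StarRing R] (u : unitaryGroup ι R) (A : Matrix ι ι R) :
    (conjStarAlgAut R _ u A).trace = A.trace := by
  rw [conjStarAlgAut_apply, trace_mul_cycle, coe_star_mul_self, one_mul]

lemma Matrix.diagonal_mem_unitaryGroup {ι : Type*} [Fintype ι] [DecidableEq ι] {v : ι → ℂ}
    (hv : ∀ i, ‖v i‖ = 1) : diagonal v ∈ unitaryGroup ι ℂ := by
  rw [mem_unitaryGroup_iff, star_eq_conjTranspose, diagonal_conjTranspose, diagonal_mul_diagonal,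
    ← diagonal_one]
  congr 1
  ext i
  rw [Pi.star_apply, Complex.star_def, Complex.mul_conj, Complex.normSq_eq_norm_sq, hv i]
  simp

open scoped Matrix.Norms.L2Operator MatrixOrder in
lemma Matrix.PosSemidef.mul_of_commute {ι : Type*} [Fintype ι] [DecidableEq ι]
    {A B : Matrix ι ι ℂ} (hA : A.PosSemidef) (hB : B.PosSemidef) (h : Commute A B) :
    (A * B).PosSemidef :=
  nonneg_iff_posSemidef.mp (h.mul_nonneg hA.nonneg hB.nonneg)

lemma Complex.exists_norm_eq_one_mul_eq_norm (z : ℂ) : ∃ u : ℂ, ‖u‖ = 1 ∧ u * z = ‖z‖ := by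
  refine ⟨exp (↑(-z.arg) * I), norm_exp_ofReal_mul_I _, ?_⟩
  conv_lhs => rw [← norm_mul_exp_arg_mul_I z]
  rw [mul_left_comm, ← exp_add]
  simp

/-- A copy of the matrices on which `N` can be installed as the norm without clashing with the
product topology of `Matrix`. -/
def NormedMatrix (n : ℕ) : Type := Matrix (Fin n) (Fin n) ℂ

instance {n : ℕ} : AddCommGroup (NormedMatrix n) :=
  inferInstanceAs (AddCommGroup (Matrix (Fin n) (Fin n) ℂ))

noncomputable instance {n : ℕ} : Module ℂ (NormedMatrix n) :=
  inferInstanceAs (Module ℂ (Matrix (Fin n) (Fin n) ℂ))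

instance {n : ℕ} : FiniteDimensional ℂ (NormedMatrix n) :=
  inferInstanceAs (FiniteDimensional ℂ (Matrix (Fin n) (Fin n) ℂ))

section DualNorm

variable {n : ℕ} {N : Matrix (Fin n) (Fin n) ℂ → ℝ}

lemma dualNorm_nonneg (B : Matrix (Fin n) (Fin n) ℂ) : 0 ≤ dualNorm N B :=
  Real.sSup_nonneg (by rintro _ ⟨A, -, rfl⟩; exact norm_nonneg _)

namespace IsUnitarilyInvariantNorm

lemma map_zero (hN : IsUnitarilyInvariantNorm N) : N 0 = 0 := by
  simpa using hN.2.1 0 0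

lemma norm_trace_mul_le_dualNorm_mul (hN : IsUnitarilyInvariantNorm N)
    (B A : Matrix (Fin n) (Fin n) ℂ) : ‖(B * A).trace‖ ≤ dualNorm N B * N A := by
  obtain ⟨hadd, hsmul, hdef, -⟩ := hN
  have h0 : N 0 = 0 := by simpa using hsmul 0 0
  have hneg (A : Matrix (Fin n) (Fin n) ℂ) : N (-A) = N A := by simpa using hsmul (-1) A
  let _ : NormedAddCommGroup (NormedMatrix n) := AddGroupNorm.toNormedAddCommGroup
    { toFun := N
      map_zero' := h0
      add_le' := hadd
      neg' := hneg
      eq_zero_of_map_eq_zero' := hdef }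
  let _ : NormedSpace ℂ (NormedMatrix n) := ⟨fun c A => (hsmul c A).le⟩
  let f : NormedMatrix n →L[ℂ] ℂ := LinearMap.toContinuousLinearMap
    ((traceLinearMap (Fin n) ℂ ℂ).comp (LinearMap.mulLeft ℂ B))
  have hf : dualNorm N B = ‖f‖ := by
    have hball : Metric.closedBall (0 : NormedMatrix n) 1 = {A | N A ≤ 1} := by
      ext A
      exact mem_closedBall_zero_iff
    rw [← f.sSup_unitClosedBall_eq_norm, hball]
    rfl
  exact hf ▸ f.le_opNorm A

lemma dualNorm_unitary_mul_mul_le (hN : IsUnitarilyInvariantNorm N)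
    (B : Matrix (Fin n) (Fin n) ℂ) (u v : unitaryGroup (Fin n) ℂ) :
    dualNorm N (u * B * v) ≤ dualNorm N B := by
  refine Real.sSup_le ?_ (dualNorm_nonneg B)
  rintro _ ⟨A, hA, rfl⟩
  calc ‖((u : Matrix (Fin n) (Fin n) ℂ) * B * v * A).trace‖ = ‖(B * (v * A * u)).trace‖ := by
        rw [mul_assoc, mul_assoc, trace_mul_comm]
        simp only [mul_assoc]
    _ ≤ dualNorm N B * N (v * A * u) := hN.norm_trace_mul_le_dualNorm_mul _ _
    _ = dualNorm N B * N A := by rw [hN.2.2.2 A v u v.2 u.2]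
    _ ≤ dualNorm N B := mul_le_of_le_one_right (dualNorm_nonneg B) hA

lemma dualNorm_unitary_mul_mul (hN : IsUnitarilyInvariantNorm N)
    (B : Matrix (Fin n) (Fin n) ℂ) (u v : unitaryGroup (Fin n) ℂ) :
    dualNorm N (u * B * v) = dualNorm N B := by
  refine le_antisymm (hN.dualNorm_unitary_mul_mul_le B u v) ?_
  have hB : ((star u : unitaryGroup (Fin n) ℂ) : Matrix (Fin n) (Fin n) ℂ) * (u * B * v) *
      (star v : unitaryGroup (Fin n) ℂ) = B := by
    rw [coe_star, coe_star, ← mul_assoc, ← mul_assoc, coe_star_mul_self, one_mul, mul_assoc,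
      mul_star_self_of_mem v.2, mul_one]
  simpa only [hB] using hN.dualNorm_unitary_mul_mul_le (u * B * v) (star u) (star v)

end IsUnitarilyInvariantNorm

end DualNorm

section NormingFunctional

variable {n : ℕ} {N : Matrix (Fin n) (Fin n) ℂ → ℝ}

def IsNormingFunctional (N : Matrix (Fin n) (Fin n) ℂ → ℝ) (A B : Matrix (Fin n) (Fin n) ℂ) :
    Prop :=
  dualNorm N B = 1 ∧ (B * A).trace = N A

lemma IsSmoothNorm.eq_of_isNormingFunctional (hsm : IsSmoothNorm N)
    {A B B' : Matrix (Fin n) (Fin n) ℂ} (hA : A ≠ 0) (hB : IsNormingFunctional N A B)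
    (hB' : IsNormingFunctional N A B') : B = B' :=
  (hsm A hA).unique hB hB'

lemma IsNormingFunctional.conjStarAlgAut (hN : IsUnitarilyInvariantNorm N)
    {A B : Matrix (Fin n) (Fin n) ℂ} (hB : IsNormingFunctional N A B)
    (u : unitaryGroup (Fin n) ℂ) :
    IsNormingFunctional N (conjStarAlgAut ℂ _ u A) (conjStarAlgAut ℂ _ u B) := by
  refine ⟨?_, ?_⟩
  · rw [conjStarAlgAut_apply, ← coe_star, hN.dualNorm_unitary_mul_mul, hB.1]
  · rw [← map_mul, trace_conjStarAlgAut, hB.2, conjStarAlgAut_apply,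
      hN.2.2.2 A u (star u) u.2 (star u).2]

lemma IsSmoothNorm.eq_diagonal_of_isNormingFunctional (hN : IsUnitarilyInvariantNorm N)
    (hsm : IsSmoothNorm N) {a : Fin n → ℂ} (ha : diagonal a ≠ 0) {B : Matrix (Fin n) (Fin n) ℂ}
    (hB : IsNormingFunctional N (diagonal a) B) : B = diagonal fun i => B i i := by
  ext i j
  rcases eq_or_ne i j with rfl | hij
  · simp
  rw [diagonal_apply_ne _ hij]
  let s : unitaryGroup (Fin n) ℂ :=
    ⟨diagonal fun k => if k = i then -1 else 1,
      diagonal_mem_unitaryGroup fun k => by split_ifs <;> simp⟩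
  have hsa : conjStarAlgAut ℂ _ s (diagonal a) = diagonal a := by
    rw [conjStarAlgAut_apply, (commute_diagonal _ _).eq, mul_assoc, mul_star_self_of_mem s.2,
      mul_one]
  have hsB : conjStarAlgAut ℂ _ s B = B :=
    hsm.eq_of_isNormingFunctional ha (hsa ▸ hB.conjStarAlgAut hN s) hB
  have hneg : -B i j = B i j := by
    simpa [s, star_eq_conjTranspose, diagonal_conjTranspose, diagonal_mul, mul_diagonal, hij.symm]
      using congr_fun₂ hsB i j
  linear_combination -hneg / 2

lemma IsSmoothNorm.nonneg_of_isNormingFunctional_diagonal (hN : IsUnitarilyInvariantNorm N)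
    (hsm : IsSmoothNorm N) {d : Fin n → ℝ} (hd : ∀ i, 0 ≤ d i)
    (hD : diagonal (fun i => (d i : ℂ)) ≠ 0) {e : Fin n → ℂ}
    (he : IsNormingFunctional N (diagonal fun i => (d i : ℂ)) (diagonal e)) : ∀ i, 0 ≤ e i := by
  set D : Matrix (Fin n) (Fin n) ℂ := diagonal fun i => (d i : ℂ)
  choose v hv1 hve using fun i => Complex.exists_norm_eq_one_mul_eq_norm (e i)
  let V : unitaryGroup (Fin n) ℂ := ⟨diagonal v, diagonal_mem_unitaryGroup hv1⟩
  have hVe : (V : Matrix (Fin n) (Fin n) ℂ) * diagonal e = diagonal fun i => (‖e i‖ : ℂ) := by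
    simp only [V, diagonal_mul_diagonal, hve]
  set s : ℝ := ∑ i, ‖e i‖ * d i
  have htr : ((V : Matrix (Fin n) (Fin n) ℂ) * diagonal e * D).trace = s := by
    simp [hVe, D, s, trace_diagonal]
  have hdual : dualNorm N (V * diagonal e) = 1 := by
    simpa [he.1] using hN.dualNorm_unitary_mul_mul (diagonal e) V 1
  have hs : s = N D := by
    refine le_antisymm ?_ ?_
    · have hs0 : 0 ≤ s := Finset.sum_nonneg fun i _ => mul_nonneg (norm_nonneg _) (hd i)
      simpa [htr, hdual, abs_of_nonneg hs0] using
        hN.norm_trace_mul_le_dualNorm_mul (V * diagonal e) D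
    · calc N D ≤ ‖(N D : ℂ)‖ := by
            rw [Complex.norm_real, Real.norm_eq_abs]
            exact le_abs_self _
        _ = ‖∑ i, e i * d i‖ := by rw [← he.2, diagonal_mul_diagonal, trace_diagonal]
        _ ≤ s := by
            refine (norm_sum_le _ _).trans_eq (Finset.sum_congr rfl fun i _ => ?_)
            simp [abs_of_nonneg (hd i)]
  have hfix : (V : Matrix (Fin n) (Fin n) ℂ) * diagonal e = diagonal e :=
    hsm.eq_of_isNormingFunctional hD ⟨hdual, by rw [htr, hs]⟩ he
  intro i
  have hei := congr_fun₂ (hVe.symm.trans hfix) i i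
  simp only [diagonal_apply_eq] at hei
  exact hei ▸ Complex.zero_le_real.mpr (norm_nonneg _)

end NormingFunctional

theorem statement1 {n : ℕ} (N : Matrix (Fin n) (Fin n) ℂ → ℝ)
    (hN : IsUnitarilyInvariantNorm N) (hsm : IsSmoothNorm N)
    (σ : Matrix (Fin n) (Fin n) ℂ) (hσ : σ.PosSemidef) (hσ1 : N σ = 1)
    (η : Matrix (Fin n) (Fin n) ℂ)
    (hη : dualNorm N η = 1 ∧ (η * σ).trace = 1) :
    η.PosSemidef ∧ η * σ = σ * η ∧ (η * σ).PosSemidef ∧ (η * σ).trace = 1 := by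
  obtain ⟨hηd, hητ⟩ := hη
  have hσ0 : σ ≠ 0 := by
    rintro rfl
    simp [hN.map_zero] at hσ1
  set φ := conjStarAlgAut ℂ (Matrix (Fin n) (Fin n) ℂ) hσ.1.eigenvectorUnitary
  set D : Matrix (Fin n) (Fin n) ℂ := diagonal fun i => (hσ.1.eigenvalues i : ℂ)
  have hσD : φ.symm σ = D := by
    rw [conjStarAlgAut_symm]
    exact hσ.1.conjStarAlgAut_star_eigenvectorUnitary
  have hD0 : D ≠ 0 := hσD ▸ (map_ne_zero_iff _ φ.symm.injective).mpr hσ0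
  have hηD : IsNormingFunctional N D (φ.symm η) := by
    rw [← hσD, conjStarAlgAut_symm]
    exact IsNormingFunctional.conjStarAlgAut hN ⟨hηd, by rw [hητ, hσ1, Complex.ofReal_one]⟩ _
  have hηdiag := hsm.eq_diagonal_of_isNormingFunctional hN hD0 hηD
  have hηnonneg := hsm.nonneg_of_isNormingFunctional_diagonal hN hσ.eigenvalues_nonneg hD0
    (hηdiag ▸ hηD)
  have hη : η = φ (diagonal fun i => φ.symm η i i) := by rw [← hηdiag, φ.apply_symm_apply]
  have hσ' : σ = φ D := by rw [← hσD, φ.apply_symm_apply]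
  have hηpsd : η.PosSemidef := by
    rw [hη, conjStarAlgAut_apply, star_eq_conjTranspose]
    exact (posSemidef_diagonal_iff.mpr hηnonneg).mul_mul_conjTranspose_same _
  have hcomm : Commute η σ := by
    rw [hη, hσ']
    exact (commute_diagonal _ _).map φ
  exact ⟨hηpsd, hcomm.eq, hηpsd.mul_of_commute hσ hcomm, hητ⟩
end

section
/- Let ‖·‖ be a unitarily invariant norm on M_n(ℂ) that is smooth and strictly convex. Let A ∈ M_n(ℂ) be positive semidefinite with ‖A‖ = 1, let η be the norming functional of A (the unique B with ‖B‖* = 1 and tr(BA) = 1), and set ρ = ηA. Then ρ is a state, and A minimizes the relative entropy with respect to ρ over the positive part of the unit ball: D(ρ||A) ≤ D(ρ||σ) for every positive semidefinite σ ∈ M_n(ℂ) with ‖σ‖ ≤ 1. -/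
open scoped ComplexOrder Matrix

/-- `N` is strictly convex. -/
def IsStrictlyConvexNorm {n : ℕ} (N : Matrix (Fin n) (Fin n) ℂ → ℝ) : Prop :=
  ∀ x y : Matrix (Fin n) (Fin n) ℂ, N x = 1 → N y = 1 → x ≠ y →
    N ((2⁻¹ : ℝ) • (x + y)) < 1

/-- The logarithm of a (positive semidefinite) matrix, by functional calculus applied to
the real logarithm (with the convention `log 0 = 0` on the kernel). -/
noncomputable def matLog {n : ℕ} (A : Matrix (Fin n) (Fin n) ℂ) :
    Matrix (Fin n) (Fin n) ℂ :=
  cfc Real.log A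

open Classical in
/-- The quantum relative entropy `D(ρ‖σ)`, valued in `EReal`: it is
`tr (ρ (log ρ - log σ))` when `ker σ ⊆ ker ρ`, and `+∞` otherwise. -/
noncomputable def relEnt {n : ℕ} (ρ σ : Matrix (Fin n) (Fin n) ℂ) : EReal :=
  if (∀ v : Fin n → ℂ, σ.mulVec v = 0 → ρ.mulVec v = 0) then
    (((ρ * (matLog ρ - matLog σ)).trace).re : EReal)
  else ⊤

/-
Write `A = U diag(a) U*`. Smoothness makes `η` the only norming functional of `A`, so it is fixed
by conjugation with every unitary commuting with `A`; the diagonal unitaries in the eigenbasis of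
`A` then force `η = U diag(f) U*`. The functionals `U diag(z) U* η` with `|z k| = 1` still have
dual norm `1`; choosing the phases `z` against a contraction `B` gives
`∑ |f k| |(U* B U)ₖₖ| ≤ 1`. For `B = A`, compared with `∑ f k a k = tr (η A) = 1`, this forces
`f k a k ≥ 0`, so `ρ = η A = U diag(|f k| a k) U*` is a state; for `B = σ` it bounds
`∑ |f k| (U* σ U)ₖₖ` by `1`. With `σ = V diag(s) V*` and `p k j = |(U* V)ₖⱼ|²`, the inequality
`D(ρ‖A) ≤ D(ρ‖σ)` becomes `∑ₖ |f k| a k ∑ⱼ p k j log s j ≤ ∑ₖ |f k| a k log a k`, which is the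
tangent-line bound `a log s ≤ a log a + s - a` summed with the weights `|f k| p k j`.
-/

open Matrix Unitary

section MatrixLemmas

variable {ι 𝕜 : Type*} [Fintype ι] [DecidableEq ι] [RCLike 𝕜]

theorem Matrix.diagonal_mem_unitaryGroup_s19 {z : ι → 𝕜} (hz : ∀ j, ‖z j‖ = 1) :
    diagonal z ∈ unitaryGroup ι 𝕜 := by
  rw [mem_unitaryGroup_iff', star_eq_conjTranspose, diagonal_conjTranspose, diagonal_mul_diagonal,
    ← diagonal_one]
  congr 1
  ext j
  simp [RCLike.conj_mul, hz j]

theorem Matrix.eq_diagonal_diag_of_forall_commute {F : Matrix ι ι 𝕜}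
    (hF : ∀ z : ι → 𝕜, (∀ j, ‖z j‖ = 1) → Commute (diagonal z) F) : F = diagonal F.diag := by
  ext i j
  rcases eq_or_ne i j with rfl | hij
  · simp
  · have hflip := congr_fun₂ (hF (fun l => if l = i then -1 else 1)
      (fun l => by split_ifs <;> simp)).eq i j
    simp only [diagonal_mul, mul_diagonal, if_pos, if_neg (Ne.symm hij)] at hflip
    rw [diagonal_apply_ne _ hij]
    linear_combination (-1 / 2 : 𝕜) * hflip

theorem Matrix.trace_diagonal_mul (d : ι → 𝕜) (M : Matrix ι ι 𝕜) :
    (diagonal d * M).trace = ∑ k, d k * M k k := by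
  simp [trace, diagonal_mul]

theorem Matrix.mul_diagonal_mul_star_apply_self (C : Matrix ι ι 𝕜) (d : ι → ℝ) (k : ι) :
    (C * diagonal (RCLike.ofReal ∘ d) * star C : Matrix ι ι 𝕜) k k
      = ((∑ j, ‖C k j‖ ^ 2 * d j : ℝ) : 𝕜) := by
  rw [mul_apply]
  simp only [mul_diagonal, star_apply, Function.comp_apply, RCLike.ofReal_sum,
    RCLike.ofReal_mul, RCLike.ofReal_pow]
  refine Finset.sum_congr rfl fun j _ => ?_
  rw [← RCLike.mul_conj]
  simp only [RCLike.star_def]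
  ring

theorem Matrix.sum_norm_sq_apply_eq_one (W : unitary (Matrix ι ι 𝕜)) (k : ι) :
    ∑ j, ‖(W : Matrix ι ι 𝕜) k j‖ ^ 2 = 1 := by
  have := mul_diagonal_mul_star_apply_self (W : Matrix ι ι 𝕜) 1 k
  simp only [Function.comp_def, Pi.one_apply, RCLike.ofReal_one, diagonal_one, mul_one,
    Unitary.mul_star_self_of_mem W.2, one_apply_eq] at this
  exact_mod_cast this.symm

theorem Unitary.star_mul_conjStarAlgAut_mul {S R : Type*} [Semiring R] [StarMul R] [SMul S R]
    [IsScalarTower S R R] [SMulCommClass S R R] (U : unitary R) (X : R) :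
    star (U : R) * conjStarAlgAut S R U X * U = X :=
  (conjStarAlgAut S R U).symm_apply_apply X

theorem Matrix.trace_conjStarAlgAut_mul (U : unitary (Matrix ι ι 𝕜)) (X B : Matrix ι ι 𝕜) :
    (conjStarAlgAut 𝕜 _ U X * B).trace = (X * (conjStarAlgAut 𝕜 _ U).symm B).trace := by
  rw [conjStarAlgAut_apply, conjStarAlgAut_symm_apply, mul_assoc, trace_mul_comm, ← mul_assoc,
    ← mul_assoc, trace_mul_comm]
  simp only [mul_assoc]

theorem Matrix.posSemidef_conjStarAlgAut_diagonal (U : unitary (Matrix ι ι 𝕜)) {d : ι → ℝ}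
    (hd : ∀ k, 0 ≤ d k) : (conjStarAlgAut 𝕜 _ U (diagonal (RCLike.ofReal ∘ d))).PosSemidef := by
  rw [conjStarAlgAut_apply, star_eq_conjTranspose]
  exact (posSemidef_diagonal_iff.2 fun k => RCLike.ofReal_nonneg.2 (hd k)).mul_mul_conjTranspose_same
    _

theorem Matrix.mul_star_mul_apply_eq_zero_of_ker_le_ker (U V : unitary (Matrix ι ι 𝕜))
    {g s : ι → ℝ}
    (hker : ∀ v, conjStarAlgAut 𝕜 _ V (diagonal (RCLike.ofReal ∘ s)) *ᵥ v = 0 →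
      conjStarAlgAut 𝕜 _ U (diagonal (RCLike.ofReal ∘ g)) *ᵥ v = 0)
    {j : ι} (hs : s j = 0) (k : ι) : (g k : 𝕜) * (star (U : Matrix ι ι 𝕜) * V) k j = 0 := by
  have hσ : conjStarAlgAut 𝕜 _ V (diagonal (RCLike.ofReal ∘ s)) *ᵥ (V *ᵥ Pi.single j 1) = 0 := by
    rw [conjStarAlgAut_apply, mulVec_mulVec, mul_assoc, Unitary.coe_star_mul_self, mul_one,
      ← mulVec_mulVec, mulVec_single_one]
    have hcol : (diagonal (RCLike.ofReal ∘ s) : Matrix ι ι 𝕜).col j = 0 := by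
      ext i
      rcases eq_or_ne i j with rfl | hij <;> simp [*]
    rw [hcol, mulVec_zero]
  have h := congrArg (fun x => (star (U : Matrix ι ι 𝕜) *ᵥ x) k) (hker _ hσ)
  simp only [conjStarAlgAut_apply, mulVec_mulVec, mulVec_zero, Pi.zero_apply] at h
  rw [← h, mulVec_single_one, col_apply]
  simp only [mul_assoc]
  rw [← mul_assoc (star (U : Matrix ι ι 𝕜)), Unitary.coe_star_mul_self, one_mul, diagonal_mul,
    Function.comp_apply]

end MatrixLemmas

theorem Complex.nonneg_of_sum_eq_one_of_sum_norm_le_one {ι : Type*} [Fintype ι] {w : ι → ℂ}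
    (h1 : ∑ i, w i = 1) (h2 : ∑ i, ‖w i‖ ≤ 1) (k : ι) : 0 ≤ w k := by
  have hgap : ∑ i, (‖w i‖ - (w i).re) = 0 := by
    refine le_antisymm ?_ (Finset.sum_nonneg fun i _ => sub_nonneg.2 (re_le_norm _))
    rw [Finset.sum_sub_distrib, ← re_sum, h1, one_re]
    linarith
  have hk := (Finset.sum_eq_zero_iff_of_nonneg fun i _ => sub_nonneg.2 (re_le_norm (w i))).1
    hgap k (Finset.mem_univ k)
  exact re_eq_norm.1 (by linarith)

theorem Real.mul_log_le_mul_log_add_sub {a s : ℝ} (ha : 0 ≤ a) (hs : 0 < s) :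
    a * log s ≤ a * log a + s - a := by
  rcases ha.eq_or_lt with rfl | ha
  · simp [hs.le]
  · have h := log_le_sub_one_of_pos (div_pos hs ha)
    rw [log_div hs.ne' ha.ne'] at h
    have := mul_le_mul_of_nonneg_left h ha.le
    have hsa : a * (s / a - 1) = s - a := by field_simp
    linarith

open Finset in
theorem Real.sum_mul_sum_mul_log_le {ι κ : Type*} [Fintype ι] [Fintype κ] {φ a : ι → ℝ}
    {s : κ → ℝ} {p : ι → κ → ℝ} (hφ : ∀ k, 0 ≤ φ k) (ha : ∀ k, 0 ≤ a k) (hs : ∀ j, 0 ≤ s j)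
    (hp : ∀ k j, 0 ≤ p k j)
    (hp1 : ∀ k, ∑ j, p k j = 1) (hker : ∀ k j, s j = 0 → φ k * a k * p k j = 0)
    (hφa : ∑ k, φ k * a k = 1) (hφs : ∑ k, φ k * ∑ j, p k j * s j ≤ 1) :
    ∑ k, φ k * a k * ∑ j, p k j * log (s j) ≤ ∑ k, φ k * a k * log (a k) := by
  have hpoint : ∀ k j, p k j * (φ k * a k * log (s j))
      ≤ p k j * (φ k * a k * log (a k) + φ k * s j - φ k * a k) := fun k j => by
    rcases (hs j).eq_or_lt with hs0 | hs0
    · -- here `log (s j) = log 0 = 0`, and `hker` kills the weight `φ k * a k * p k j`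
      have := hker k j hs0.symm
      rw [← hs0, log_zero]
      exact le_of_eq (by linear_combination (1 - log (a k)) * this)
    · refine mul_le_mul_of_nonneg_left ?_ (hp k j)
      have := mul_le_mul_of_nonneg_left (mul_log_le_mul_log_add_sub (ha k) hs0) (hφ k)
      linarith
  calc ∑ k, φ k * a k * ∑ j, p k j * log (s j)
      = ∑ k, ∑ j, p k j * (φ k * a k * log (s j)) := by
        simp only [mul_sum]; exact sum_congr rfl fun k _ => sum_congr rfl fun j _ => by ring
    _ ≤ ∑ k, ∑ j, p k j * (φ k * a k * log (a k) + φ k * s j - φ k * a k) :=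
        sum_le_sum fun k _ => sum_le_sum fun j _ => hpoint k j
    _ = ∑ k, φ k * a k * log (a k) + ∑ k, φ k * ∑ j, p k j * s j - ∑ k, φ k * a k := by
        simp only [mul_sub, mul_add, sum_sub_distrib, sum_add_distrib, ← sum_mul, hp1, mul_sum]
        simp only [one_mul, mul_left_comm (p _ _)]
    _ ≤ ∑ k, φ k * a k * log (a k) := by linarith

section NormingFunctional

variable {n : ℕ} {N : Matrix (Fin n) (Fin n) ℂ → ℝ}

theorem IsUnitarilyInvariantNorm.dualNorm_unitary_mul_mul_s19 (hN : IsUnitarilyInvariantNorm N)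
    {U V : Matrix (Fin n) (Fin n) ℂ} (hU : U ∈ unitaryGroup (Fin n) ℂ)
    (hV : V ∈ unitaryGroup (Fin n) ℂ) (X : Matrix (Fin n) (Fin n) ℂ) :
    dualNorm N (U * X * V) = dualNorm N X := by
  unfold dualNorm
  congr 1
  ext r
  simp only [Set.mem_image, Set.mem_ofPred_eq]
  constructor
  · rintro ⟨B, hB, rfl⟩
    refine ⟨V * B * U, by rwa [hN.2.2.2 B V U hV hU], ?_⟩
    rw [show U * X * V * B = U * (X * V * B) by simp only [mul_assoc], trace_mul_comm U]
    simp only [mul_assoc]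
  · rintro ⟨B, hB, rfl⟩
    refine ⟨star V * B * star U, by rwa [hN.2.2.2 B _ _ (star_mem hV) (star_mem hU)], ?_⟩
    simp only [mul_assoc]
    rw [← mul_assoc V, hV.2, one_mul, trace_mul_comm U]
    simp only [mul_assoc]
    rw [hU.1, mul_one]

theorem norm_trace_mul_le_one_of_dualNorm_eq_one {X B : Matrix (Fin n) (Fin n) ℂ}
    (hX : dualNorm N X = 1) (hB : N B ≤ 1) : ‖(X * B).trace‖ ≤ 1 := by
  have hbdd : BddAbove ((fun A => ‖(X * A).trace‖) '' {A | N A ≤ 1}) := by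
    by_contra h
    rw [dualNorm, Real.sSup_of_not_bddAbove h] at hX
    exact zero_ne_one hX
  exact hX ▸ le_csSup hbdd ⟨B, hB, rfl⟩

theorem IsSmoothNorm.commute_of_commute (hN : IsUnitarilyInvariantNorm N) (hsm : IsSmoothNorm N)
    {A η W : Matrix (Fin n) (Fin n) ℂ} (hA : A ≠ 0) (hη : dualNorm N η = 1)
    (hηA : (η * A).trace = N A) (hW : W ∈ unitaryGroup (Fin n) ℂ) (hWA : Commute W A) :
    Commute W η := by
  have hconj : W * η * star W = η := by
    refine (hsm A hA).unique ⟨?_, ?_⟩ ⟨hη, hηA⟩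
    · rw [hN.dualNorm_unitary_mul_mul_s19 hW (star_mem hW), hη]
    · rw [mul_assoc, mul_assoc, trace_mul_comm, mul_assoc, mul_assoc, ← hWA.eq,
        ← mul_assoc (star W), hW.1, one_mul, hηA]
  calc W * η = W * η * star W * W := by rw [mul_assoc _ (star W), hW.1, mul_one]
    _ = η * W := by rw [hconj]

theorem IsSmoothNorm.exists_eq_conjStarAlgAut_diagonal (hN : IsUnitarilyInvariantNorm N)
    (hsm : IsSmoothNorm N) {A η : Matrix (Fin n) (Fin n) ℂ} (hA : A.IsHermitian) (hA0 : A ≠ 0)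
    (hη : dualNorm N η = 1) (hηA : (η * A).trace = N A) :
    ∃ f, η = conjStarAlgAut ℂ _ hA.eigenvectorUnitary (diagonal f) := by
  set U := hA.eigenvectorUnitary
  set ψ := conjStarAlgAut ℂ (Matrix (Fin n) (Fin n) ℂ) U
  have hF : ψ.symm η = diagonal (ψ.symm η).diag := eq_diagonal_diag_of_forall_commute fun z hz => by
    have hW : ψ (diagonal z) ∈ unitaryGroup (Fin n) ℂ :=
      mul_mem (mul_mem U.2 (diagonal_mem_unitaryGroup_s19 hz)) (star_mem U.2)
    have hWA : Commute (ψ (diagonal z)) A :=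
      hA.spectral_theorem ▸ (commute_diagonal _ _).map ψ
    simpa using (hsm.commute_of_commute hN hA0 hη hηA hW hWA).map ψ.symm
  exact ⟨_, by rw [← hF, ψ.apply_symm_apply]⟩

theorem IsUnitarilyInvariantNorm.sum_norm_mul_norm_le_one (hN : IsUnitarilyInvariantNorm N)
    {η B : Matrix (Fin n) (Fin n) ℂ} (hη : dualNorm N η = 1) (hB : N B ≤ 1)
    (U : unitaryGroup (Fin n) ℂ) {f : Fin n → ℂ}
    (hηf : η = conjStarAlgAut ℂ _ U (diagonal f)) :
    ∑ k, ‖f k‖ * ‖(star (U : Matrix (Fin n) (Fin n) ℂ) * B * U) k k‖ ≤ 1 := by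
  set b := fun k => (star (U : Matrix (Fin n) (Fin n) ℂ) * B * U) k k
  set z : Fin n → ℂ := fun k => Complex.exp (↑(-Complex.arg (f k * b k)) * Complex.I)
  have hz : ∀ k, z k * (f k * b k) = ‖f k * b k‖ := fun k => by
    conv_lhs => rw [← Complex.norm_mul_exp_arg_mul_I (f k * b k)]
    rw [mul_left_comm, ← Complex.exp_add, Complex.ofReal_neg, neg_mul, neg_add_cancel,
      Complex.exp_zero, mul_one]
  have hW : conjStarAlgAut ℂ _ U (diagonal z) ∈ unitaryGroup (Fin n) ℂ :=
    mul_mem (mul_mem U.2 (diagonal_mem_unitaryGroup_s19 fun k => Complex.norm_exp_ofReal_mul_I _))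
      (star_mem U.2)
  have hWη : dualNorm N (conjStarAlgAut ℂ _ U (diagonal z) * η) = 1 := by
    rw [← mul_one (_ * η), hN.dualNorm_unitary_mul_mul_s19 hW (one_mem _), hη]
  have htr : (conjStarAlgAut ℂ _ U (diagonal z) * η * B).trace = ∑ k, (‖f k * b k‖ : ℂ) := by
    rw [hηf, ← map_mul, diagonal_mul_diagonal, trace_conjStarAlgAut_mul, trace_diagonal_mul,
      conjStarAlgAut_symm_apply]
    exact Finset.sum_congr rfl fun k _ => by rw [mul_assoc, hz]
  have := norm_trace_mul_le_one_of_dualNorm_eq_one hWη hB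
  rw [htr, ← Complex.ofReal_sum, Complex.norm_real, Real.norm_of_nonneg
    (Finset.sum_nonneg fun k _ => norm_nonneg _)] at this
  simpa only [norm_mul] using this

theorem IsUnitarilyInvariantNorm.mul_eigenvalues_eq_ofReal_norm_mul
    (hN : IsUnitarilyInvariantNorm N) {A η : Matrix (Fin n) (Fin n) ℂ} (hA : A.PosSemidef)
    (hA1 : N A = 1) (hη : dualNorm N η = 1) (hηA : (η * A).trace = 1) {f : Fin n → ℂ}
    (hηf : η = conjStarAlgAut ℂ _ hA.isHermitian.eigenvectorUnitary (diagonal f)) (k : Fin n) :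
    f k * hA.isHermitian.eigenvalues k = ((‖f k‖ * hA.isHermitian.eigenvalues k : ℝ) : ℂ) := by
  set U := hA.isHermitian.eigenvectorUnitary
  set a := hA.isHermitian.eigenvalues
  have hAdiag : ∀ k, (star (U : Matrix (Fin n) (Fin n) ℂ) * A * U) k k = a k := fun k => by
    rw [hA.isHermitian.spectral_theorem, star_mul_conjStarAlgAut_mul, diagonal_apply_eq]
    rfl
  have hsum : ∑ k, f k * a k = 1 := by
    rw [← hηA, hηf, trace_conjStarAlgAut_mul, trace_diagonal_mul, conjStarAlgAut_symm_apply]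
    simp only [hAdiag]
  have hnonneg := Complex.nonneg_of_sum_eq_one_of_sum_norm_le_one hsum
    (by simpa only [norm_mul, hAdiag] using hN.sum_norm_mul_norm_le_one hη hA1.le U hηf) k
  rw [Complex.eq_coe_norm_of_nonneg hnonneg, norm_mul, Complex.norm_real,
    Real.norm_of_nonneg (hA.eigenvalues_nonneg k)]

end NormingFunctional

section RelativeEntropy

variable {n : ℕ}

theorem Matrix.PosSemidef.re_trace_mul_matLog_le {A σ ρ : Matrix (Fin n) (Fin n) ℂ}
    (hA : A.PosSemidef) (hσ : σ.PosSemidef) {φ : Fin n → ℝ} (hφ : ∀ k, 0 ≤ φ k)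
    (hρ : ρ = conjStarAlgAut ℂ _ hA.isHermitian.eigenvectorUnitary
      (diagonal (RCLike.ofReal ∘ (φ * hA.isHermitian.eigenvalues))))
    (hρ1 : ρ.trace = 1)
    (hφσ : ∑ k, φ k * ((star (hA.isHermitian.eigenvectorUnitary : Matrix (Fin n) (Fin n) ℂ) * σ *
      hA.isHermitian.eigenvectorUnitary) k k).re ≤ 1)
    (hker : ∀ v, σ *ᵥ v = 0 → ρ *ᵥ v = 0) :
    (ρ * matLog σ).trace.re ≤ (ρ * matLog A).trace.re := by
  set U := hA.isHermitian.eigenvectorUnitary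
  set V := hσ.isHermitian.eigenvectorUnitary
  set a := hA.isHermitian.eigenvalues
  set s := hσ.isHermitian.eigenvalues
  set p : Fin n → Fin n → ℝ := fun k j => ‖(star (U : Matrix (Fin n) (Fin n) ℂ) * V) k j‖ ^ 2
  have hψV : ∀ (d : Fin n → ℝ) k,
      (star (U : Matrix (Fin n) (Fin n) ℂ) * conjStarAlgAut ℂ _ V (diagonal (RCLike.ofReal ∘ d))
        * U) k k = ((∑ j, p k j * d j : ℝ) : ℂ) := fun d k => by
    rw [← conjStarAlgAut_star_apply (S := ℂ), ← conjStarAlgAut_mul_apply, conjStarAlgAut_apply]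
    exact mul_diagonal_mul_star_apply_self _ d k
  have hp1 : ∀ k, ∑ j, p k j = 1 := fun k => by
    simpa using sum_norm_sq_apply_eq_one (star U * V) k
  have hker' : ∀ k j, s j = 0 → φ k * a k * p k j = 0 := fun k j hs => by
    rw [hρ, hσ.isHermitian.spectral_theorem] at hker
    have := mul_star_mul_apply_eq_zero_of_ker_le_ker U V hker hs k
    rcases mul_eq_zero.1 this with h | h
    · rw [← Pi.mul_apply, RCLike.ofReal_eq_zero.1 h, zero_mul]
    · simp [p, h]
  have htr : ∀ X, (ρ * X).trace.re
      = ∑ k, φ k * a k * ((star (U : Matrix (Fin n) (Fin n) ℂ) * X * U) k k).re := fun X => by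
    rw [hρ, trace_conjStarAlgAut_mul, trace_diagonal_mul, Complex.re_sum]
    exact Finset.sum_congr rfl fun k _ => Complex.re_ofReal_mul _ _
  have hφA : ∑ k, φ k * a k = 1 := by
    simpa only [mul_one, Unitary.coe_star_mul_self, one_apply_eq, Complex.one_re, hρ1, eq_comm]
      using htr 1
  have hσk : ∀ k, ((star (U : Matrix (Fin n) (Fin n) ℂ) * σ * U) k k).re = ∑ j, p k j * s j :=
    fun k => by rw [hσ.isHermitian.spectral_theorem, hψV, Complex.ofReal_re]
  have hlogσ : ∀ k, ((star (U : Matrix (Fin n) (Fin n) ℂ) * matLog σ * U) k k).re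
      = ∑ j, p k j * Real.log (s j) := fun k => by
    rw [matLog, hσ.isHermitian.cfc_eq, IsHermitian.cfc, hψV, Complex.ofReal_re]
    rfl
  have hlogA : ∀ k, ((star (U : Matrix (Fin n) (Fin n) ℂ) * matLog A * U) k k).re
      = Real.log (a k) := fun k => by
    rw [matLog, hA.isHermitian.cfc_eq, IsHermitian.cfc, star_mul_conjStarAlgAut_mul,
      diagonal_apply_eq]
    rfl
  simp only [htr, hlogσ, hlogA]
  simp only [hσk] at hφσ
  exact Real.sum_mul_sum_mul_log_le hφ hA.eigenvalues_nonneg hσ.eigenvalues_nonneg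
    (fun _ _ => sq_nonneg _) hp1 hker' hφA hφσ

theorem relEnt_le_relEnt_of_re_trace_mul_matLog_le {ρ A σ : Matrix (Fin n) (Fin n) ℂ}
    (hA : ∀ v, A *ᵥ v = 0 → ρ *ᵥ v = 0)
    (h : (∀ v, σ *ᵥ v = 0 → ρ *ᵥ v = 0) → (ρ * matLog σ).trace.re ≤ (ρ * matLog A).trace.re) :
    relEnt ρ A ≤ relEnt ρ σ := by
  unfold relEnt
  rw [if_pos hA]
  split_ifs with hσ
  · rw [EReal.coe_le_coe_iff, mul_sub, mul_sub, trace_sub, trace_sub, Complex.sub_re,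
      Complex.sub_re]
    linarith [h hσ]
  · exact le_top

end RelativeEntropy

theorem statement19_general {n : ℕ} (N : Matrix (Fin n) (Fin n) ℂ → ℝ)
    (hN : IsUnitarilyInvariantNorm N) (hsm : IsSmoothNorm N)
    (A : Matrix (Fin n) (Fin n) ℂ) (hA : A.PosSemidef) (hA1 : N A = 1)
    (η : Matrix (Fin n) (Fin n) ℂ)
    (hη : dualNorm N η = 1 ∧ (η * A).trace = 1) :
    (η * A).PosSemidef ∧ (η * A).trace = 1 ∧
      ∀ σ : Matrix (Fin n) (Fin n) ℂ, σ.PosSemidef → N σ ≤ 1 →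
        relEnt (η * A) A ≤ relEnt (η * A) σ := by
  obtain ⟨hη1, hηA⟩ := hη
  have hA0 : A ≠ 0 := by rintro rfl; simp at hηA
  set U := hA.isHermitian.eigenvectorUnitary
  obtain ⟨f, hηf⟩ := hsm.exists_eq_conjStarAlgAut_diagonal hN hA.isHermitian hA0 hη1
    (by rw [hηA, hA1, Complex.ofReal_one])
  have hρ : η * A = conjStarAlgAut ℂ _ U
      (diagonal (RCLike.ofReal ∘ ((‖f ·‖) * hA.isHermitian.eigenvalues))) := by
    conv_lhs => rw [hηf]; arg 2; rw [hA.isHermitian.spectral_theorem]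
    rw [← map_mul, diagonal_mul_diagonal]
    exact congrArg _ (congrArg diagonal
      (funext (hN.mul_eigenvalues_eq_ofReal_norm_mul hA hA1 hη1 hηA hηf)))
  refine ⟨hρ ▸ posSemidef_conjStarAlgAut_diagonal U fun k =>
      mul_nonneg (norm_nonneg _) (hA.eigenvalues_nonneg k), hηA, fun σ hσ hσ1 => ?_⟩
  refine relEnt_le_relEnt_of_re_trace_mul_matLog_le
    (fun v hv => by rw [← mulVec_mulVec, hv, mulVec_zero]) fun hker => ?_
  refine hA.re_trace_mul_matLog_le hσ (fun k => norm_nonneg _) hρ (hρ ▸ hηA) ?_ (hρ ▸ hker)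
  exact (Finset.sum_le_sum fun k _ => mul_le_mul_of_nonneg_left (Complex.re_le_norm _)
    (norm_nonneg _)).trans (hN.sum_norm_mul_norm_le_one hη1 hσ1 U hηf)

theorem statement19 {n : ℕ} (N : Matrix (Fin n) (Fin n) ℂ → ℝ)
    (hN : IsUnitarilyInvariantNorm N) (hsm : IsSmoothNorm N)
    (hsc : IsStrictlyConvexNorm N)
    (A : Matrix (Fin n) (Fin n) ℂ) (hA : A.PosSemidef) (hA1 : N A = 1)
    (η : Matrix (Fin n) (Fin n) ℂ)
    (hη : dualNorm N η = 1 ∧ (η * A).trace = 1) :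
    (η * A).PosSemidef ∧ (η * A).trace = 1 ∧
      ∀ σ : Matrix (Fin n) (Fin n) ℂ, σ.PosSemidef → N σ ≤ 1 →
        relEnt (η * A) A ≤ relEnt (η * A) σ :=
  statement19_general N hN hsm A hA hA1 η hη
end
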